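/- arXiv:0805.4634 — 3 statements merged into one kernel-verified Lean document; each statement's English description precedes it below -/
import Mathlib

section
/- Let (L, F) be a filtered cochain complex of abelian groups with Dec(F)^p L^l := { x ∈ F^{p+l} L^l : d x ∈ F^{p+l+1} L^{l+1} }. For any filtration by subcomplexes G of L, let G^p H^l(L) denote the image of H^l(G^p L) → H^l(L). Then for all integers p and l, Dec(F)^p H^l(L) = F^{p+l} H^l(L) as subgroups of H^l(L). -/
set_option linter.unusedVariables false


/-! Basic theory of cochain complexes of abelian groups, indexed by `ℤ`,
with subcomplexes, quotient complexes, cohomology and induced maps. -/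

/-- A cochain complex of abelian groups indexed by `ℤ`. -/
structure Cochain : Type 1 where
  X : ℤ → Type
  inst : ∀ l, AddCommGroup (X l)
  d : ∀ l, X l →+ X (l + 1)
  dd : ∀ l (x : X l), d (l + 1) (d l x) = 0

attribute [instance] Cochain.inst

namespace Cochain

variable (L M : Cochain)

/-- Transport along an equality of degrees. -/
def castAdd {a b : ℤ} (h : a = b) : L.X a ≃+ L.X b := by
  subst h; exact AddEquiv.refl _

@[simp] theorem castAdd_rfl {a : ℤ} (x : L.X a) : L.castAdd rfl x = x := rfl

/-- Cocycles in degree `l`. -/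
def cocycles (l : ℤ) : AddSubgroup (L.X l) := (L.d l).ker

/-- Coboundaries in degree `l`. -/
def bdry (l : ℤ) : AddSubgroup (L.X l) :=
  ((L.castAdd (show l - 1 + 1 = l by ring)).toAddMonoidHom.comp (L.d (l - 1))).range

/-- Cohomology in degree `l`: cocycles modulo coboundaries. -/
abbrev H (l : ℤ) : Type := ↥(L.cocycles l) ⧸ (L.bdry l).addSubgroupOf (L.cocycles l)

/-- The projection from cocycles onto cohomology. -/
abbrev Hmk (l : ℤ) : ↥(L.cocycles l) →+ L.H l := QuotientAddGroup.mk' _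

/-- A morphism of cochain complexes. -/
structure Hom (L M : Cochain) where
  f : ∀ l, L.X l →+ M.X l
  comm : ∀ l (x : L.X l), f (l + 1) (L.d l x) = M.d l (f l x)

variable {L M}

theorem Hom.cast_natural (φ : Hom L M) {a b : ℤ} (h : a = b) (x : L.X a) :
    φ.f b (L.castAdd h x) = M.castAdd h (φ.f a x) := by subst h; rfl

theorem mem_bdry_map (φ : Hom L M) (l : ℤ) {x : L.X l} (hx : x ∈ L.bdry l) :
    φ.f l x ∈ M.bdry l := by
  obtain ⟨y, hy⟩ := hx
  refine ⟨φ.f (l - 1) y, ?_⟩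
  simp only [AddMonoidHom.comp_apply, AddEquiv.coe_toAddMonoidHom] at hy ⊢
  rw [← hy, φ.cast_natural, φ.comm]

/-- The map induced on cocycles by a morphism of complexes. -/
def Hom.cocyclesMap (φ : Hom L M) (l : ℤ) : ↥(L.cocycles l) →+ ↥(M.cocycles l) :=
  AddMonoidHom.codRestrict ((φ.f l).domRestrict (L.cocycles l)) (M.cocycles l) (fun x => by
    have hx : L.d l x.1 = 0 := x.2
    show M.d l (φ.f l x.1) = 0
    rw [← φ.comm l x.1, hx, map_zero])

/-- The map induced on cohomology by a morphism of complexes. -/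
def Hom.Hmap (φ : Hom L M) (l : ℤ) : L.H l →+ M.H l :=
  QuotientAddGroup.lift _ ((M.Hmk l).comp (φ.cocyclesMap l)) (fun x hx => by
    have hx' : (x : L.X l) ∈ L.bdry l := AddSubgroup.mem_addSubgroupOf.mp hx
    have : (φ.cocyclesMap l x : M.X l) ∈ M.bdry l := mem_bdry_map φ l hx'
    simpa using (QuotientAddGroup.eq_zero_iff _).2 (AddSubgroup.mem_addSubgroupOf.mpr this))

variable (L)

/-- A family of subgroups is a subcomplex if it is stable under the differential. -/
def IsSubcomplex (S : ∀ l, AddSubgroup (L.X l)) : Prop :=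
  ∀ l, ∀ x ∈ S l, L.d l x ∈ S (l + 1)

/-- The subcomplex determined by a `d`-stable family of subgroups. -/
def sub (S : ∀ l, AddSubgroup (L.X l)) (hS : L.IsSubcomplex S) : Cochain where
  X l := S l
  inst l := inferInstance
  d l := AddMonoidHom.codRestrict ((L.d l).domRestrict (S l)) (S (l + 1))
    (fun x => hS l x.1 x.2)
  dd l x := Subtype.ext (L.dd l x.1)

/-- The inclusion of a subcomplex. -/
def subIncl (S : ∀ l, AddSubgroup (L.X l)) (hS : L.IsSubcomplex S) :
    Hom (L.sub S hS) L where
  f l := (S l).subtype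
  comm _ _ := rfl

/-- The quotient complex by a subcomplex. -/
def quot (S : ∀ l, AddSubgroup (L.X l)) (hS : L.IsSubcomplex S) : Cochain where
  X l := L.X l ⧸ S l
  inst l := inferInstance
  d l := QuotientAddGroup.lift (S l) ((QuotientAddGroup.mk' (S (l + 1))).comp (L.d l))
    (fun x hx => by simpa using (QuotientAddGroup.eq_zero_iff _).2 (hS l x hx))
  dd l x := QuotientAddGroup.induction_on x (fun y => by
    simp only [QuotientAddGroup.lift_mk, AddMonoidHom.comp_apply,
      QuotientAddGroup.mk'_apply, QuotientAddGroup.lift_mk, L.dd]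
    rfl)

/-- The projection onto a quotient complex. -/
def quotHom (S : ∀ l, AddSubgroup (L.X l)) (hS : L.IsSubcomplex S) :
    Hom L (L.quot S hS) where
  f l := QuotientAddGroup.mk' (S l)
  comm l x := by
    simp only [quot, QuotientAddGroup.mk'_apply, QuotientAddGroup.lift_mk,
      AddMonoidHom.comp_apply]
    rfl

/-- The filtration induced on cohomology by a subcomplex: the image of
`H^l(S) → H^l(L)`. -/
def imageInH (S : ∀ l, AddSubgroup (L.X l)) (hS : L.IsSubcomplex S) (l : ℤ) :
    AddSubgroup (L.H l) :=
  ((L.subIncl S hS).Hmap l).range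

variable {L}

/-- Restriction of a morphism of complexes to subcomplexes. -/
def Hom.restrictHom (φ : Hom L M) (S : ∀ l, AddSubgroup (L.X l))
    (T : ∀ l, AddSubgroup (M.X l)) (hS : L.IsSubcomplex S) (hT : M.IsSubcomplex T)
    (h : ∀ l, ∀ x ∈ S l, φ.f l x ∈ T l) :
    Hom (L.sub S hS) (M.sub T hT) where
  f l := AddMonoidHom.codRestrict ((φ.f l).domRestrict (S l)) (T l) (fun x => h l x.1 x.2)
  comm l x := Subtype.ext (φ.comm l x.1)

/-- Descent of a morphism of complexes to quotient complexes. -/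
def Hom.descendHom (φ : Hom L M) (S : ∀ l, AddSubgroup (L.X l))
    (T : ∀ l, AddSubgroup (M.X l)) (hS : L.IsSubcomplex S) (hT : M.IsSubcomplex T)
    (h : ∀ l, ∀ x ∈ S l, φ.f l x ∈ T l) :
    Hom (L.quot S hS) (M.quot T hT) where
  f l := QuotientAddGroup.map (S l) (T l) (φ.f l) (fun x hx => h l x hx)
  comm l x := QuotientAddGroup.induction_on x (fun y => by
    simp only [quot, QuotientAddGroup.lift_mk, QuotientAddGroup.map_mk,
      QuotientAddGroup.mk'_apply, AddMonoidHom.comp_apply, φ.comm]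
    exact congrArg (QuotientAddGroup.mk' _) (φ.comm l y))

end Cochain
namespace Cochain

variable (L M : Cochain)

theorem IsSubcomplex.inf {L : Cochain} {S T : ∀ l, AddSubgroup (L.X l)}
    (hS : L.IsSubcomplex S) (hT : L.IsSubcomplex T) :
    L.IsSubcomplex (fun l => S l ⊓ T l) := fun l x hx =>
  AddSubgroup.mem_inf.2 ⟨hS l x (AddSubgroup.mem_inf.1 hx).1, hT l x (AddSubgroup.mem_inf.1 hx).2⟩

theorem IsSubcomplex.sup {L : Cochain} {S T : ∀ l, AddSubgroup (L.X l)}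
    (hS : L.IsSubcomplex S) (hT : L.IsSubcomplex T) :
    L.IsSubcomplex (fun l => S l ⊔ T l) := by
  intro l x hx
  rw [AddSubgroup.mem_sup] at hx ⊢
  obtain ⟨y, hy, z, hz, rfl⟩ := hx
  exact ⟨L.d l y, hS l y hy, L.d l z, hT l z hz, (map_add _ _ _).symm⟩

theorem ker_isSubcomplex {L M : Cochain} (φ : Hom L M) :
    L.IsSubcomplex (fun l => (φ.f l).ker) := by
  intro l x hx
  rw [AddMonoidHom.mem_ker] at hx ⊢
  rw [φ.comm l x, hx, map_zero]

/-- The graded piece `S/T` of two nested subcomplexes, as a cochain complex. -/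
def GrCochain (L : Cochain) (S T : ∀ l, AddSubgroup (L.X l)) (hS : L.IsSubcomplex S)
    (hT : L.IsSubcomplex T) (_hle : ∀ l, T l ≤ S l) : Cochain :=
  (L.sub S hS).quot (fun l => (T l).addSubgroupOf (S l)) (fun l x hx =>
    AddSubgroup.mem_addSubgroupOf.2 (hT l x.1 (AddSubgroup.mem_addSubgroupOf.1 hx)))

/-- The morphism induced on graded pieces by a filtered morphism of complexes. -/
def Hom.grHom {L M : Cochain} (φ : Hom L M) (S T : ∀ l, AddSubgroup (L.X l))
    (S' T' : ∀ l, AddSubgroup (M.X l)) (hS : L.IsSubcomplex S) (hT : L.IsSubcomplex T)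
    (hS' : M.IsSubcomplex S') (hT' : M.IsSubcomplex T')
    (hle : ∀ l, T l ≤ S l) (hle' : ∀ l, T' l ≤ S' l)
    (h1 : ∀ l, ∀ x ∈ S l, φ.f l x ∈ S' l) (h2 : ∀ l, ∀ x ∈ T l, φ.f l x ∈ T' l) :
    Hom (GrCochain L S T hS hT hle) (GrCochain M S' T' hS' hT' hle') :=
  (φ.restrictHom S S' hS hS' h1).descendHom _ _ _ _
    (fun l x hx => AddSubgroup.mem_addSubgroupOf.2
      (h2 l x.1 (AddSubgroup.mem_addSubgroupOf.1 hx)))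

/-- The shifted (décalée) filtration `Dec(F)`:
`Dec(F)^p L^l = { x ∈ F^{p+l} L^l : d x ∈ F^{p+l+1} L^{l+1} }`. -/
def decF (L : Cochain) (F : ℤ → ∀ l, AddSubgroup (L.X l)) (p l : ℤ) :
    AddSubgroup (L.X l) :=
  F (p + l) l ⊓ (F (p + l + 1) (l + 1)).comap (L.d l)

theorem decF_isSubcomplex (L : Cochain) (F : ℤ → ∀ l, AddSubgroup (L.X l)) (p : ℤ) :
    L.IsSubcomplex (fun l => decF L F p l) := by
  intro l x hx
  simp only [decF, AddSubgroup.mem_inf, AddSubgroup.mem_comap] at hx ⊢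
  refine ⟨?_, ?_⟩
  · have h : p + (l + 1) = p + l + 1 := by ring
    rw [h]
    exact hx.2
  · rw [L.dd]
    exact zero_mem _

theorem decF_mono (L : Cochain) (F : ℤ → ∀ l, AddSubgroup (L.X l))
    (hdec : ∀ p l, F (p + 1) l ≤ F p l) (p l : ℤ) :
    decF L F (p + 1) l ≤ decF L F p l := by
  intro x hx
  simp only [decF, AddSubgroup.mem_inf, AddSubgroup.mem_comap] at hx ⊢
  have e1 : p + 1 + l = p + l + 1 := by ring
  rw [e1] at hx
  exact ⟨hdec (p + l) l hx.1, hdec (p + l + 1) (l + 1) hx.2⟩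

/-- The iterated graded piece `Gr^a_F Gr^b_G L`, as a cochain complex:
`(F^a ∩ G^b) / (F^{a+1} ∩ G^b + F^a ∩ G^{b+1})`. -/
def GrGrCochain (L : Cochain) (F G : ℤ → ∀ l, AddSubgroup (L.X l))
    (hFsub : ∀ p, L.IsSubcomplex (F p)) (hGsub : ∀ p, L.IsSubcomplex (G p))
    (hFdec : ∀ p l, F (p + 1) l ≤ F p l) (hGdec : ∀ p l, G (p + 1) l ≤ G p l)
    (a b : ℤ) : Cochain :=
  GrCochain L (fun l => F a l ⊓ G b l)
    (fun l => (F (a + 1) l ⊓ G b l) ⊔ (F a l ⊓ G (b + 1) l))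
    (IsSubcomplex.inf (hFsub a) (hGsub b))
    (IsSubcomplex.sup (IsSubcomplex.inf (hFsub (a + 1)) (hGsub b))
      (IsSubcomplex.inf (hFsub a) (hGsub (b + 1))))
    (fun l => sup_le (inf_le_inf_right _ (hFdec a l)) (inf_le_inf_left _ (hGdec b l)))

end Cochain

namespace Cochain

variable (L : Cochain)

theorem mem_imageInH (S : ∀ l, AddSubgroup (L.X l)) (hS : L.IsSubcomplex S) (l : ℤ)
    (y : L.H l) :
    y ∈ imageInH L S hS l ↔ ∃ x : ↥(L.cocycles l), x.1 ∈ S l ∧ L.Hmk l x = y := by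
  constructor
  · rintro ⟨z, rfl⟩
    induction z using QuotientAddGroup.induction_on with
    | H w => exact ⟨⟨w.1.1, congrArg Subtype.val w.2⟩, w.1.2, rfl⟩
  · rintro ⟨x, hxS, rfl⟩
    have hw : (L.sub S hS).d l ⟨x.1, hxS⟩ = 0 := Subtype.ext x.2
    exact ⟨(L.sub S hS).Hmk l ⟨⟨x.1, hxS⟩, hw⟩, rfl⟩

theorem imageInH_congr {S T : ∀ l, AddSubgroup (L.X l)} (hS : L.IsSubcomplex S)
    (hT : L.IsSubcomplex T) {l : ℤ} (h : ∀ x ∈ L.cocycles l, x ∈ S l ↔ x ∈ T l) :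
    imageInH L S hS l = imageInH L T hT l := by
  ext y
  rw [mem_imageInH, mem_imageInH]
  exact exists_congr fun x => and_congr_left fun _ => h x x.2

theorem mem_decF_iff_of_mem_cocycles (F : ℤ → ∀ l, AddSubgroup (L.X l)) (p : ℤ) {l : ℤ}
    {x : L.X l} (hx : x ∈ L.cocycles l) : x ∈ decF L F p l ↔ x ∈ F (p + l) l := by
  have hdx : L.d l x = 0 := hx
  simp [decF, hdx]

end Cochain

open Cochain in
theorem dec_filtration_on_cohomology_general (L : Cochain)
    (F : ℤ → ∀ l, AddSubgroup (L.X l))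
    (hsub : ∀ p, L.IsSubcomplex (F p))
    (p l : ℤ) :
    imageInH L (fun l' => decF L F p l') (decF_isSubcomplex L F p) l
      = imageInH L (F (p + l)) (hsub (p + l)) l :=
  imageInH_congr L _ _ fun _ => mem_decF_iff_of_mem_cocycles L F p

open Cochain in
/-- For a filtered cochain complex `(L, F)` of abelian groups with shifted
filtration `Dec(F)^p L^l = { x ∈ F^{p+l} L^l : d x ∈ F^{p+l+1} L^{l+1} }`, the induced
filtrations on cohomology (images of `H^l(G^p L) → H^l(L)`) satisfy
`Dec(F)^p H^l(L) = F^{p+l} H^l(L)` as subgroups of `H^l(L)`. -/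
theorem dec_filtration_on_cohomology (L : Cochain)
    (F : ℤ → ∀ l, AddSubgroup (L.X l))
    (hdec : ∀ p l, F (p + 1) l ≤ F p l)
    (hsub : ∀ p, L.IsSubcomplex (F p))
    (hfin : ∀ l : ℤ, ∃ a b : ℤ, a ≤ b ∧ F a l = ⊤ ∧ F b l = ⊥)
    (p l : ℤ) :
    imageInH L (fun l' => decF L F p l') (decF_isSubcomplex L F p) l
      = imageInH L (F (p + l)) (hsub (p + l)) l :=
  dec_filtration_on_cohomology_general L F hsub p l
end

section
/- Let V be a finite-dimensional vector space over a field k, and let F, G be two finite decreasing filtrations of V by subspaces. Then there exists a bigraded decomposition V = ⊕_{i,j} V^{i,j} such that F^p V = ⊕_{i ≥ p, j} V^{i,j} and G^q V = ⊕_{i, j ≥ q} V^{i,j} simultaneously (a common splitting of the two filtrations). -/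
/-- Auxiliary: if each `W ij` sits inside `F ij.1 ⊓ G ij.2` and is disjoint from
`(F ij.1 ⊓ G (ij.2+1)) ⊔ F (ij.1+1)`, then any finite family of elements of the `W ij`
summing to zero is identically zero. -/
private lemma aux_zsum {k V : Type*} [Field k] [AddCommGroup V] [Module k V]
    (F G : ℤ → Submodule k V) (hFanti : Antitone F) (hGanti : Antitone G)
    (W : ℤ × ℤ → Submodule k V)
    (hWle : ∀ ij : ℤ × ℤ, W ij ≤ F ij.1 ⊓ G ij.2)
    (hWB : ∀ i j : ℤ, W (i, j) ⊓ ((F i ⊓ G (j + 1)) ⊔ F (i + 1)) = ⊥)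
    (s : Finset (ℤ × ℤ)) :
    ∀ y : ℤ × ℤ → V, (∀ ij ∈ s, y ij ∈ W ij) → (∑ ij ∈ s, y ij) = 0 →
      ∀ ij ∈ s, y ij = 0 := by
  classical
  induction s using Finset.strongInduction with
  | _ s ih =>
    intro y hy hsum ij hij
    have hne : s.Nonempty := ⟨ij, hij⟩
    have hne1 : (s.image Prod.fst).Nonempty := hne.image _
    set i0 := (s.image Prod.fst).min' hne1 with hi0def
    have himin : ∀ pq ∈ s, i0 ≤ pq.1 := fun pq h =>
      Finset.min'_le _ _ (Finset.mem_image_of_mem _ h)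
    set t := s.filter (fun pq => pq.1 = i0) with htdef
    have hne2 : (t.image Prod.snd).Nonempty := by
      obtain ⟨pq, hpq, h1⟩ := Finset.mem_image.mp ((s.image Prod.fst).min'_mem hne1)
      exact ⟨pq.2, Finset.mem_image_of_mem _ (Finset.mem_filter.mpr ⟨hpq, h1⟩)⟩
    set j0 := (t.image Prod.snd).min' hne2 with hj0def
    have hjmin : ∀ pq ∈ s, pq.1 = i0 → j0 ≤ pq.2 := fun pq h h1 =>
      Finset.min'_le _ _ (Finset.mem_image_of_mem _ (Finset.mem_filter.mpr ⟨h, h1⟩))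
    have hmem : (i0, j0) ∈ s := by
      obtain ⟨pq, hpq, h2⟩ := Finset.mem_image.mp ((t.image Prod.snd).min'_mem hne2)
      obtain ⟨hpqs, h1⟩ := Finset.mem_filter.mp hpq
      have : pq = (i0, j0) := Prod.ext h1 h2
      rwa [this] at hpqs
    set s' := s.erase (i0, j0) with hs'def
    have hsum' : y (i0, j0) + ∑ pq ∈ s', y pq = 0 := by
      rwa [Finset.add_sum_erase _ _ hmem]
    have hsplit : (∑ pq ∈ s', y pq) =
        (∑ pq ∈ s'.filter (fun pq => pq.1 = i0), y pq) +
          ∑ pq ∈ s'.filter (fun pq => ¬ pq.1 = i0), y pq :=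
      (Finset.sum_filter_add_sum_filter_not _ _ _).symm
    have hu : (∑ pq ∈ s'.filter (fun pq => pq.1 = i0), y pq) ∈ F i0 ⊓ G (j0 + 1) := by
      refine Submodule.sum_mem _ fun pq hpq => ?_
      obtain ⟨hpq', h1⟩ := Finset.mem_filter.mp hpq
      obtain ⟨hnepq, hpqs⟩ := Finset.mem_erase.mp hpq'
      have h2 : j0 + 1 ≤ pq.2 := by
        have hj := hjmin pq hpqs h1
        rcases lt_or_eq_of_le hj with h | h
        · omega
        · exact absurd (Prod.ext h1 h.symm) hnepq
      have hmem2 := Submodule.mem_inf.mp (hWle pq (hy pq hpqs))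
      exact Submodule.mem_inf.mpr ⟨by rw [← h1]; exact hmem2.1, hGanti h2 hmem2.2⟩
    have hv : (∑ pq ∈ s'.filter (fun pq => ¬ pq.1 = i0), y pq) ∈ F (i0 + 1) := by
      refine Submodule.sum_mem _ fun pq hpq => ?_
      obtain ⟨hpq', h1⟩ := Finset.mem_filter.mp hpq
      have hpqs := (Finset.mem_erase.mp hpq').2
      have h2 : i0 + 1 ≤ pq.1 := by
        have := himin pq hpqs
        omega
      exact hFanti h2 (Submodule.mem_inf.mp (hWle pq (hy pq hpqs))).1
    have hy0 : y (i0, j0) ∈ W (i0, j0) ⊓ ((F i0 ⊓ G (j0 + 1)) ⊔ F (i0 + 1)) := by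
      refine Submodule.mem_inf.mpr ⟨hy _ hmem, ?_⟩
      have heq : y (i0, j0) = -((∑ pq ∈ s'.filter (fun pq => pq.1 = i0), y pq) +
          ∑ pq ∈ s'.filter (fun pq => ¬ pq.1 = i0), y pq) := by
        rw [← hsplit]
        exact eq_neg_of_add_eq_zero_left hsum'
      rw [heq]
      exact neg_mem (add_mem (Submodule.mem_sup_left hu) (Submodule.mem_sup_right hv))
    have hz : y (i0, j0) = 0 := by
      rw [hWB i0 j0] at hy0
      simpa using hy0
    have hsum'' : (∑ pq ∈ s', y pq) = 0 := by
      rw [hz, zero_add] at hsum'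
      exact hsum'
    have hall := ih s' (Finset.erase_ssubset hmem) y
      (fun pq h => hy pq (Finset.mem_erase.mp h).2) hsum''
    rcases eq_or_ne ij (i0, j0) with h | h
    · rw [h]; exact hz
    · exact hall ij (Finset.mem_erase.mpr ⟨h, hij⟩)

/-- Any two finite decreasing filtrations `F`, `G` on a finite-dimensional
vector space `V` admit a common (bigraded) splitting: there are subspaces `W^{i,j}` with
`V = ⊕_{i,j} W^{i,j}`, `F^p V = ⊕_{i ≥ p, j} W^{i,j}` and `G^q V = ⊕_{i, j ≥ q} W^{i,j}`. -/
theorem common_splitting_of_two_filtrations {k V : Type*} [Field k] [AddCommGroup V]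
    [Module k V] [FiniteDimensional k V]
    (F G : ℤ → Submodule k V)
    (hF : ∀ p, F (p + 1) ≤ F p) (hG : ∀ p, G (p + 1) ≤ G p)
    (hFfin : ∃ a b : ℤ, F a = ⊤ ∧ F b = ⊥) (hGfin : ∃ a b : ℤ, G a = ⊤ ∧ G b = ⊥) :
    ∃ W : ℤ × ℤ → Submodule k V,
      iSupIndep W ∧
      (⨆ ij : ℤ × ℤ, W ij) = ⊤ ∧
      (∀ p : ℤ, F p = ⨆ ij : ℤ × ℤ, ⨆ _ : p ≤ ij.1, W ij) ∧
      (∀ q : ℤ, G q = ⨆ ij : ℤ × ℤ, ⨆ _ : q ≤ ij.2, W ij) := by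
  classical
  obtain ⟨a, b, hFa, hFb⟩ := hFfin
  obtain ⟨a', b', hGa, hGb⟩ := hGfin
  have hFanti : Antitone F := antitone_int_of_succ_le hF
  have hGanti : Antitone G := antitone_int_of_succ_le hG
  -- choose the pieces `W0 p q` as relative complements
  have hWex : ∀ p q : ℤ, ∃ Wpq : Submodule k V,
      Wpq ≤ F p ⊓ G q ∧
      Wpq ⊓ ((F (p + 1) ⊓ G q) ⊔ (F p ⊓ G (q + 1))) = ⊥ ∧
      Wpq ⊔ ((F (p + 1) ⊓ G q) ⊔ (F p ⊓ G (q + 1))) = F p ⊓ G q := by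
    intro p q
    obtain ⟨c, hc⟩ := exists_isCompl ((F (p + 1) ⊓ G q) ⊔ (F p ⊓ G (q + 1)))
    have hBle : (F (p + 1) ⊓ G q) ⊔ (F p ⊓ G (q + 1)) ≤ F p ⊓ G q :=
      sup_le (inf_le_inf (hF p) le_rfl) (inf_le_inf le_rfl (hG q))
    refine ⟨c ⊓ (F p ⊓ G q), inf_le_right, ?_, ?_⟩
    · rw [inf_assoc, inf_of_le_right hBle, ← disjoint_iff]
      exact hc.symm.disjoint
    · rw [sup_comm, ← sup_inf_assoc_of_le _ hBle, hc.sup_eq_top, top_inf_eq]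
  choose W0 hW0le hW0bot hW0sup using hWex
  set W : ℤ × ℤ → Submodule k V := fun ij => W0 ij.1 ij.2 with hWdef
  have hWle : ∀ ij : ℤ × ℤ, W ij ≤ F ij.1 ⊓ G ij.2 := fun ij => hW0le ij.1 ij.2
  have hWF : ∀ ij : ℤ × ℤ, W ij ≤ F ij.1 := fun ij => (hWle ij).trans inf_le_left
  have hWG : ∀ ij : ℤ × ℤ, W ij ≤ G ij.2 := fun ij => (hWle ij).trans inf_le_right
  -- the derived disjointness needed for `aux_zsum`, via modularity
  have hWB : ∀ i j : ℤ, W (i, j) ⊓ ((F i ⊓ G (j + 1)) ⊔ F (i + 1)) = ⊥ := by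
    intro i j
    rw [eq_bot_iff, ← hW0bot i j]
    refine le_inf inf_le_left ?_
    have h1 : W (i, j) ⊓ ((F i ⊓ G (j + 1)) ⊔ F (i + 1)) ≤
        ((F i ⊓ G (j + 1)) ⊔ F (i + 1)) ⊓ (F i ⊓ G j) :=
      le_inf inf_le_right ((inf_le_inf (hWle (i, j)) le_rfl).trans inf_le_left)
    have h2 : ((F i ⊓ G (j + 1)) ⊔ F (i + 1)) ⊓ (F i ⊓ G j) =
        (F i ⊓ G (j + 1)) ⊔ (F (i + 1) ⊓ (F i ⊓ G j)) :=
      sup_inf_assoc_of_le _ (inf_le_inf le_rfl (hG j))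
    have h3 : F (i + 1) ⊓ (F i ⊓ G j) = F (i + 1) ⊓ G j := by
      rw [← inf_assoc, inf_of_le_left (hF i)]
    refine h1.trans ?_
    rw [h2, h3, sup_comm]
  -- the doubly-indexed sups
  set S : ℤ → ℤ → Submodule k V :=
    fun p q => ⨆ ij : ℤ × ℤ, ⨆ _ : p ≤ ij.1 ∧ q ≤ ij.2, W ij with hSdef
  have hSle : ∀ p q : ℤ, ∀ T : Submodule k V,
      (∀ ij : ℤ × ℤ, p ≤ ij.1 → q ≤ ij.2 → W ij ≤ T) → S p q ≤ T := fun p q T h =>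
    iSup_le fun ij => iSup_le fun hc => h ij hc.1 hc.2
  have hleS : ∀ p q : ℤ, ∀ ij : ℤ × ℤ, p ≤ ij.1 → q ≤ ij.2 → W ij ≤ S p q :=
    fun p q ij h1 h2 => le_iSup_of_le ij (le_iSup_of_le ⟨h1, h2⟩ le_rfl)
  -- degenerate cases
  have hbotF : ∀ p q : ℤ, b ≤ p → F p ⊓ G q = S p q := by
    intro p q h
    have h1 : F p = ⊥ := le_bot_iff.mp (hFb ▸ hFanti h)
    have h2 : S p q = ⊥ := le_bot_iff.mp (hSle p q ⊥ fun ij hi _ =>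
      (hWF ij).trans ((hFanti hi).trans h1.le))
    rw [h1, h2, bot_inf_eq]
  have hbotG : ∀ p q : ℤ, b' ≤ q → F p ⊓ G q = S p q := by
    intro p q h
    have h1 : G q = ⊥ := le_bot_iff.mp (hGb ▸ hGanti h)
    have h2 : S p q = ⊥ := le_bot_iff.mp (hSle p q ⊥ fun ij _ hj =>
      (hWG ij).trans ((hGanti hj).trans h1.le))
    rw [h1, h2, inf_bot_eq]
  -- main induction
  have key : ∀ n : ℕ, ∀ p q : ℤ, b - p + (b' - q) ≤ (n : ℤ) → F p ⊓ G q = S p q := by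
    intro n
    induction n with
    | zero =>
      intro p q hn
      rcases le_or_gt b p with h | h
      · exact hbotF p q h
      rcases le_or_gt b' q with h' | h'
      · exact hbotG p q h'
      omega
    | succ n ihn =>
      intro p q hn
      rcases le_or_gt b p with h | h
      · exact hbotF p q h
      rcases le_or_gt b' q with h' | h'
      · exact hbotG p q h'
      have e1 : F (p + 1) ⊓ G q = S (p + 1) q := ihn (p + 1) q (by push_cast at hn ⊢; omega)
      have e2 : F p ⊓ G (q + 1) = S p (q + 1) := ihn p (q + 1) (by push_cast at hn ⊢; omega)
      have hstep : F p ⊓ G q = W (p, q) ⊔ ((F (p + 1) ⊓ G q) ⊔ (F p ⊓ G (q + 1))) :=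
        (hW0sup p q).symm
      rw [hstep, e1, e2]
      apply le_antisymm
      · refine sup_le (hleS p q (p, q) le_rfl le_rfl) (sup_le ?_ ?_)
        · exact hSle (p + 1) q _ fun ij h1 h2 => hleS p q ij (by omega) h2
        · exact hSle p (q + 1) _ fun ij h1 h2 => hleS p q ij h1 (by omega)
      · refine hSle p q _ fun ij h1 h2 => ?_
        rcases le_or_gt (p + 1) ij.1 with hi | hi
        · exact (hleS (p + 1) q ij hi h2).trans (le_sup_of_le_right le_sup_left)
        · rcases le_or_gt (q + 1) ij.2 with hj | hj
          · exact (hleS p (q + 1) ij h1 hj).trans (le_sup_of_le_right le_sup_right)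
          · have : ij = (p, q) := Prod.ext (by omega) (by omega)
            rw [this]
            exact le_sup_left
  have keyall : ∀ p q : ℤ, F p ⊓ G q = S p q := fun p q =>
    key (b - p + (b' - q)).toNat p q (Int.self_le_toNat _)
  refine ⟨W, ?_, ?_, ?_, ?_⟩
  · -- independence
    intro ij0
    rw [disjoint_iff, eq_bot_iff]
    intro x hx
    obtain ⟨hx1, hx2⟩ := Submodule.mem_inf.mp hx
    set W' : ℤ × ℤ → Submodule k V := fun ij => if ij = ij0 then ⊥ else W ij with hW'def
    have hX : (⨆ ij, ⨆ _ : ij ≠ ij0, W ij) = ⨆ ij, W' ij := by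
      refine iSup_congr fun ij => ?_
      by_cases h : ij = ij0
      · simp [hW'def, h]
      · simp [hW'def, h]
    rw [hX] at hx2
    obtain ⟨f, hf, hfsum⟩ := (Submodule.mem_iSup_iff_exists_finsupp W' x).mp hx2
    have hf0 : f ij0 = 0 := by
      have := hf ij0
      simpa [hW'def] using this
    set s : Finset (ℤ × ℤ) := insert ij0 f.support with hsdef
    set y : ℤ × ℤ → V := fun ij => if ij = ij0 then -x else f ij with hydef
    have hij0s : ij0 ∉ f.support := by simp [hf0]
    have hy : ∀ ij ∈ s, y ij ∈ W ij := by
      intro ij hij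
      by_cases h : ij = ij0
      · rw [hydef]
        simp only [if_pos h, h]
        exact neg_mem hx1
      · rw [hydef]
        simp only [if_neg h]
        have := hf ij
        simpa [hW'def, h] using this
    have hsum : (∑ ij ∈ s, y ij) = 0 := by
      rw [hsdef, Finset.sum_insert hij0s]
      have h1 : (∑ ij ∈ f.support, y ij) = ∑ ij ∈ f.support, f ij := by
        refine Finset.sum_congr rfl fun ij hij => ?_
        have hne : ij ≠ ij0 := fun h => hij0s (h ▸ hij)
        simp [hydef, hne]
      have h2 : (∑ ij ∈ f.support, f ij) = x := hfsum
      rw [h1, h2]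
      simp [hydef]
    have hzero := aux_zsum F G hFanti hGanti W hWle hWB s y hy hsum ij0
      (Finset.mem_insert_self _ _)
    have : -x = 0 := by simpa [hydef] using hzero
    simpa using this
  · -- sup = ⊤
    apply le_antisymm le_top
    have h1 : (⊤ : Submodule k V) = S a a' := by
      rw [← keyall, hFa, hGa, top_inf_eq]
    rw [h1]
    exact hSle a a' _ fun ij _ _ => le_iSup W ij
  · -- F
    intro p
    apply le_antisymm
    · have h1 : F p = S p a' := by rw [← keyall, hGa, inf_top_eq]
      rw [h1]
      exact hSle p a' _ fun ij hi _ => le_iSup_of_le ij (le_iSup_of_le hi le_rfl)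
    · exact iSup_le fun ij => iSup_le fun h => (hWF ij).trans (hFanti h)
  · -- G
    intro q
    apply le_antisymm
    · have h1 : G q = S a q := by rw [← keyall, hFa, top_inf_eq]
      rw [h1]
      exact hSle a q _ fun ij _ hj => le_iSup_of_le ij (le_iSup_of_le hj le_rfl)
    · exact iSup_le fun ij => iSup_le fun h => (hWG ij).trans (hGanti h)
end

section
/- Every injective object in the category of sheaves of abelian groups on a topological space X is flabby: if I is an injective sheaf of abelian groups on X, then for every open subset U ⊆ X the restriction map I(X) → I(U) is surjective. -/
/-!
Let `a ∈ I(U)` and `j : U ↪ X`. The sections of `I` vanishing near every point outside `U` form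
a subsheaf `A ⊆ I` containing `a`; such a section is determined by its restriction to `U`, so
restriction embeds `A` into `j_* j^* I`. By injectivity the inclusion `A ⟶ I` extends along this
embedding to `e : j_* j^* I ⟶ I`, and `e` maps the global section of `j_* j^* I` given by `a` to a
global section of `I` restricting to `a`.
-/

open CategoryTheory TopologicalSpace Opposite
open scoped AlgebraicGeometry

universe u v

namespace TopCat

variable {X : TopCat.{u}}

/-- Unlike `TopCat.Presheaf.isSheaf_iff_isSheafUniqueGluing`, this needs no limits of size `u`
in `AddCommGrpCat.{v}`. -/
theorem Presheaf.isSheaf_iff_isSheafUniqueGluing_addCommGrpCat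
    (F : X.Presheaf AddCommGrpCat.{v}) : F.IsSheaf ↔ F.IsSheafUniqueGluing :=
  (⟨GrothendieckTopology.HasSheafCompose.isSheaf F,
    CategoryTheory.Presheaf.isSheaf_of_isSheaf_comp _ F (forget _)⟩ :
      F.IsSheaf ↔ Presheaf.IsSheaf (F ⋙ forget _)).trans
    (isSheaf_iff_isSheafUniqueGluing_types _)

namespace Sheaf

/-- Restriction of sections from `W` to `W ⊓ U`, as a morphism `F ⟶ j_* j^* F`. -/
def toPushforwardSheafRestrict {C : Type*} [Category C] (F : X.Sheaf C) (U : Opens X) :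
    F ⟶ (pushforward _ U.inclusion').obj (U.sheafRestrict.obj F) :=
  ⟨Functor.whiskerRight (NatTrans.op U.isOpenEmbedding.isOpenMap.adjunction.counit) F.obj⟩

variable (F : X.Sheaf AddCommGrpCat.{v})

theorem eq_zero_of_eq_zero_on_cover {ι : Type u} (V : ι → Opens X) {W : Opens X}
    (hV : ∀ j, V j ≤ W) (hW : W ≤ iSup V) (s : F.obj.obj (op W))
    (h : ∀ j, s |_ₕ homOfLE (hV j) = 0) : s = 0 := by
  obtain rfl : W = iSup V := le_antisymm hW (iSup_le hV)
  exact ((Presheaf.isSheaf_iff_isSheafUniqueGluing_addCommGrpCat _).mp F.property V (fun _ => 0)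
    (fun _ _ => by simp only [map_zero])).unique h (fun _ => map_zero _)

theorem eq_zero_of_locally_eq_zero {W : Opens X} (s : F.obj.obj (op W))
    (h : ∀ x ∈ W, ∃ (V : Opens X) (_ : V ≤ W), x ∈ V ∧ s |_ V = 0) : s = 0 := by
  choose V hVW hxV hs using h
  exact eq_zero_of_eq_zero_on_cover F (fun x : W => V x.1 x.2) (fun x => hVW x.1 x.2)
    (fun x hx => Opens.mem_iSup.mpr ⟨⟨x, hx⟩, hxV x hx⟩) s fun x => hs x.1 x.2

variable (U : Opens X)

def supportedSections (W : Opens X) : AddSubgroup (F.obj.obj (op W)) where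
  carrier := {s | ∀ x ∈ W, x ∉ U → ∃ (V : Opens X) (_ : V ≤ W), x ∈ V ∧ s |_ V = 0}
  zero_mem' {x} hx _ := ⟨_, le_rfl, hx, map_zero _⟩
  add_mem' {s t} hs ht x hx hxU := by
    obtain ⟨V, hVW, hxV, hs⟩ := hs x hx hxU
    obtain ⟨V', hV'W, hxV', ht⟩ := ht x hx hxU
    refine ⟨V ⊓ V', inf_le_left.trans hVW, ⟨hxV, hxV'⟩, ?_⟩
    rw [Presheaf.restrict_sum, ← Presheaf.restrict_restrict inf_le_left hVW s, hs,
      ← Presheaf.restrict_restrict inf_le_right hV'W t, ht]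
    simp only [Presheaf.restrictOpen, Presheaf.restrict, map_zero, add_zero]
  neg_mem' {s} hs x hx hxU := by
    obtain ⟨V, hVW, hxV, hs⟩ := hs x hx hxU
    refine ⟨V, hVW, hxV, ?_⟩
    simp only [Presheaf.restrictOpen, Presheaf.restrict, map_neg] at hs ⊢
    rw [hs, neg_zero]

theorem restrict_mem_supportedSections {W W' : Opens X} (h : W' ≤ W) {s : F.obj.obj (op W)}
    (hs : s ∈ supportedSections F U W) : s |_ W' ∈ supportedSections F U W' := by
  intro x hx hxU
  obtain ⟨V, hVW, hxV, hs⟩ := hs x (h hx) hxU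
  refine ⟨V ⊓ W', inf_le_right, ⟨hxV, hx⟩, ?_⟩
  rw [Presheaf.restrict_restrict inf_le_right h, ← Presheaf.restrict_restrict inf_le_left hVW, hs]
  exact map_zero _

def supportedInPresheaf : X.Presheaf AddCommGrpCat.{v} where
  obj W := AddCommGrpCat.of (supportedSections F U W.unop)
  map {W W'} i := AddCommGrpCat.ofHom <|
    ((F.obj.map i).hom.comp (supportedSections F U W.unop).subtype).codRestrict _
      fun s => restrict_mem_supportedSections F U i.unop.le s.2
  map_id W := by
    ext s
    exact Presheaf.restrict_self s.1
  map_comp {W W' W''} i j := by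
    ext s
    exact (Presheaf.restrict_restrict j.unop.le i.unop.le s.1).symm

theorem isSheaf_supportedInPresheaf : (supportedInPresheaf F U).IsSheaf := by
  refine (Presheaf.isSheaf_iff_isSheafUniqueGluing_addCommGrpCat _).mpr fun ι V sf compat => ?_
  obtain ⟨s, hs, hs_unique⟩ := (Presheaf.isSheaf_iff_isSheafUniqueGluing_addCommGrpCat _).mp
    F.property V (fun i => (sf i).1) fun i j => congrArg Subtype.val (compat i j)
  have hs_mem : s ∈ supportedSections F U (iSup V) := by
    intro x hx hxU
    obtain ⟨i, hxi⟩ := Opens.mem_iSup.mp hx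
    obtain ⟨V', hV'i, hxV', h0⟩ := (sf i).2 x hxi hxU
    refine ⟨V', hV'i.trans (le_iSup V i), hxV', ?_⟩
    rw [← Presheaf.restrict_restrict hV'i (le_iSup V i)]
    exact (congrArg _ (hs i)).trans h0
  exact ⟨⟨s, hs_mem⟩, fun i => Subtype.ext (hs i),
    fun t ht => Subtype.ext (hs_unique t.1 fun i => congrArg Subtype.val (ht i))⟩

def supportedIn : X.Sheaf AddCommGrpCat.{v} :=
  ⟨supportedInPresheaf F U, isSheaf_supportedInPresheaf F U⟩

def supportedInι : supportedIn F U ⟶ F :=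
  ⟨{ app W := AddCommGrpCat.ofHom (supportedSections F U W.unop).subtype }⟩

instance : Mono (supportedInι F U ≫ toPushforwardSheafRestrict F U) := by
  have : ∀ W, Mono ((supportedInι F U ≫ toPushforwardSheafRestrict F U).hom.app W) := by
    intro W
    refine (AddCommGrpCat.mono_iff_injective _).mpr <| (injective_iff_map_eq_zero _).mpr
      fun s hs => Subtype.ext <| eq_zero_of_locally_eq_zero F s.1 fun x hx => ?_
    by_cases hxU : x ∈ U
    · exact ⟨_, (U.isOpenEmbedding.isOpenMap.adjunction.counit.app W.unop).le,
        ⟨⟨x, hxU⟩, hx, rfl⟩, hs⟩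
    · exact s.2 x hx hxU
  have := NatTrans.mono_of_mono_app (supportedInι F U ≫ toPushforwardSheafRestrict F U).hom
  exact Sheaf.Hom.mono_of_presheaf_mono _ _ _

theorem exists_pushforward_map_eq_toPushforwardSheafRestrict_app (s : F.obj.obj (op U)) :
    ∃ t, ((pushforward _ U.inclusion').obj (U.sheafRestrict.obj F)).obj.map
      (homOfLE le_top).op t = (toPushforwardSheafRestrict F U).hom.app (op U) s :=
  ⟨Presheaf.restrictOpen s _ ((Opens.functor_map_eq_inf U ⊤).le.trans inf_le_right),
    Presheaf.restrict_restrict (F := F.obj)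
      (U.isOpenEmbedding.isOpenMap.functor.map ((Opens.map U.inclusion').map (homOfLE le_top))).le
      ((Opens.functor_map_eq_inf U ⊤).le.trans inf_le_right) s⟩

end Sheaf

end TopCat

/-- Every injective object in the category of sheaves of abelian groups on
a topological space `X` is flabby: all restriction maps `I(X) → I(U)` are surjective. -/
theorem injective_sheaf_is_flabby (X : TopCat) (I : TopCat.Sheaf AddCommGrpCat X)
    (hI : Injective I) (U : Opens X) :
    Function.Surjective (I.val.map (homOfLE (le_top : U ≤ ⊤)).op) := by
  intro a
  have ha : a ∈ I.supportedSections U U := fun x hx hxU => absurd hx hxU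
  obtain ⟨t, ht⟩ := I.exists_pushforward_map_eq_toPushforwardSheafRestrict_app U a
  let m := I.supportedInι U ≫ I.toPushforwardSheafRestrict U
  let e := Injective.factorThru (I.supportedInι U) m
  refine ⟨e.hom.app _ t, ?_⟩
  calc I.obj.map _ (e.hom.app _ t) = e.hom.app _ (m.hom.app (op U) ⟨a, ha⟩) := by
        rw [← ConcreteCategory.comp_apply, ← e.hom.naturality, ConcreteCategory.comp_apply, ht]
        rfl
    _ = (I.supportedInι U).hom.app (op U) ⟨a, ha⟩ :=
        congrArg (fun f => f.hom.app (op U) ⟨a, ha⟩)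
          (Injective.comp_factorThru (I.supportedInι U) m)
    _ = a := rfl
end
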